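/- Fix indices i, j with 1 ≤ i ≤ n, 1 ≤ j ≤ q. Assume w^t := W_{ij} > 0 and (W·A·S·Sᵀ·Aᵀ)_{ij} > 0. Let F(w) = D(W', A, S) where W' agrees with W except that its (i,j) entry is replaced by w, and let G(w, w^t) = F(w^t) + F'(w^t)·(w − w^t) + ((W·A·S·Sᵀ·Aᵀ)_{ij} / w^t)·(w − w^t)². Then the function w ↦ G(w, w^t) has a unique global minimizer, and that minimizer equals the multiplicative update w^t · (X·Sᵀ·Aᵀ)_{ij} / (W·A·S·Sᵀ·Aᵀ)_{ij}. -/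

import Mathlib

/-!
The objective is a quadratic polynomial in each single entry of `W`, and `G` is obtained from its
Taylor expansion at `wᵗ` by replacing the curvature `(A·S·Sᵀ·Aᵀ)_{jj}` with `(W·A·S·Sᵀ·Aᵀ)_{ij}/wᵗ`.
So `G` is a quadratic with positive leading coefficient whose linear coefficient is
`F'(wᵗ) = -2((X·Sᵀ·Aᵀ)_{ij} - (W·A·S·Sᵀ·Aᵀ)_{ij})`; completing the square puts its vertex at
`wᵗ - F'(wᵗ)·wᵗ/(2(W·A·S·Sᵀ·Aᵀ)_{ij}) = wᵗ·(X·Sᵀ·Aᵀ)_{ij}/(W·A·S·Sᵀ·Aᵀ)_{ij}`.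
-/

open Matrix

/-- The GBR-NMF objective `D(W,A,S) = ‖X − W·A·S‖_F² = Tr((X − WAS)(X − WAS)ᵀ)`. -/
noncomputable def objD {n p q : ℕ} (X : Matrix (Fin n) (Fin p) ℝ)
    (W : Matrix (Fin n) (Fin q) ℝ) (A : Matrix (Fin q) (Fin q) ℝ)
    (S : Matrix (Fin q) (Fin p) ℝ) : ℝ :=
  Matrix.trace ((X - W * A * S) * (X - W * A * S)ᵀ)

/-- The matrix agreeing with `M` except that its `(i,j)` entry is replaced by `w`. -/
def updEntry {m k : ℕ} (M : Matrix (Fin m) (Fin k) ℝ) (i : Fin m) (j : Fin k) (w : ℝ) :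
    Matrix (Fin m) (Fin k) ℝ :=
  fun a b => if a = i ∧ b = j then w else M a b

theorem unique_minimizer_of_eq_add_mul_sq {f : ℝ → ℝ} {k v : ℝ} (hk : 0 < k)
    (hf : ∀ w, f w = f v + k * (w - v) ^ 2) :
    (∀ w, f v ≤ f w) ∧ ∀ m, (∀ w, f m ≤ f w) → m = v := by
  refine ⟨fun w => ?_, fun m hm => ?_⟩
  · rw [hf w]
    exact le_add_of_nonneg_right (mul_nonneg hk.le (sq_nonneg _))
  · have hsq : k * (m - v) ^ 2 ≤ 0 := by linarith [hm v, hf m]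
    have : (m - v) ^ 2 = 0 := le_antisymm (nonpos_of_mul_nonpos_right hsq hk) (sq_nonneg _)
    exact sub_eq_zero.mp (pow_eq_zero_iff two_ne_zero |>.mp this)

theorem deriv_eq_of_forall_eq_quadratic {f : ℝ → ℝ} {c b a w₀ : ℝ}
    (hf : ∀ w, f w = c + b * (w - w₀) + a * (w - w₀) ^ 2) : deriv f w₀ = b := by
  have hlin : HasDerivAt (fun w : ℝ => w - w₀) 1 w₀ := (hasDerivAt_id w₀).sub_const w₀
  have hquad := ((hlin.const_mul b).const_add c).add ((hlin.pow 2).const_mul a)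
  norm_num at hquad
  rw [funext hf]
  exact hquad.deriv

namespace Matrix

variable {m n : Type*} [Fintype m] [Fintype n] {α : Type*} [CommRing α]

theorem trace_sub_smul_mul_transpose_sub_smul (R N : Matrix m n α) (c : α) :
    trace ((R - c • N) * (R - c • N)ᵀ)
      = trace (R * Rᵀ) - 2 * c * trace (N * Rᵀ) + c ^ 2 * trace (N * Nᵀ) := by
  have hsymm : trace (R * Nᵀ) = trace (N * Rᵀ) := by
    rw [← trace_transpose, transpose_mul, transpose_transpose]
  simp only [transpose_sub, transpose_smul, Matrix.sub_mul, Matrix.mul_sub, Matrix.smul_mul,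
    Matrix.mul_smul, trace_sub, trace_smul, hsymm, smul_eq_mul]
  ring

variable [DecidableEq m] [DecidableEq n] {k : Type*} [Fintype k]

theorem trace_single_one_mul_mul_transpose (i : m) (j : n) (M : Matrix n k α)
    (R : Matrix m k α) : trace (single i j (1 : α) * M * Rᵀ) = (R * Mᵀ) i j := by
  rw [Matrix.mul_assoc, trace_single_mul, one_smul, ← transpose_apply (M * Rᵀ),
    transpose_mul, transpose_transpose]

theorem trace_single_one_mul_mul_transpose_self (i : m) (j : n) (M : Matrix n k α) :
    trace (single i j (1 : α) * M * (single i j (1 : α) * M)ᵀ) = (M * Mᵀ) j j := by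
  rw [transpose_mul, transpose_single, ← Matrix.mul_assoc, Matrix.mul_assoc (single i j 1),
    single_mul_mul_single, trace_single_eq_same, one_mul, mul_one]

end Matrix

theorem updEntry_eq_add_smul_single {m k : ℕ} (M : Matrix (Fin m) (Fin k) ℝ) (i : Fin m)
    (j : Fin k) (w : ℝ) : updEntry M i j w = M + (w - M i j) • single i j (1 : ℝ) := by
  ext a b
  by_cases h : a = i ∧ b = j
  · obtain ⟨rfl, rfl⟩ := h
    simp [updEntry]
  · have h' : ¬(i = a ∧ j = b) := fun h'' => h ⟨h''.1.symm, h''.2.symm⟩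
    simp [updEntry, h, h']

theorem objD_updEntry {n p q : ℕ} (X : Matrix (Fin n) (Fin p) ℝ)
    (W : Matrix (Fin n) (Fin q) ℝ) (A : Matrix (Fin q) (Fin q) ℝ) (S : Matrix (Fin q) (Fin p) ℝ)
    (i : Fin n) (j : Fin q) (w : ℝ) :
    objD X (updEntry W i j w) A S
      = objD X W A S - 2 * ((X * Sᵀ * Aᵀ) i j - (W * A * S * Sᵀ * Aᵀ) i j) * (w - W i j)
        + (A * S * Sᵀ * Aᵀ) j j * (w - W i j) ^ 2 := by
  have hres : X - updEntry W i j w * A * S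
      = (X - W * A * S) - (w - W i j) • (single i j (1 : ℝ) * (A * S)) := by
    rw [updEntry_eq_add_smul_single]
    simp only [Matrix.add_mul, Matrix.smul_mul, Matrix.mul_assoc]
    abel
  have hcross : (X - W * A * S) * (A * S)ᵀ = X * Sᵀ * Aᵀ - W * A * S * Sᵀ * Aᵀ := by
    simp only [transpose_mul, Matrix.sub_mul, Matrix.mul_assoc]
  have hcurv : A * S * (A * S)ᵀ = A * S * Sᵀ * Aᵀ := by
    simp only [transpose_mul, Matrix.mul_assoc]
  unfold objD
  rw [hres, trace_sub_smul_mul_transpose_sub_smul, trace_single_one_mul_mul_transpose,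
    trace_single_one_mul_mul_transpose_self, hcross, hcurv, Matrix.sub_apply]
  ring

/-- With `wᵗ = W_{ij} > 0` and `(W·A·S·Sᵀ·Aᵀ)_{ij} > 0`, the auxiliary quadratic
`G(w, wᵗ) = F(wᵗ) + F'(wᵗ)(w − wᵗ) + ((W·A·S·Sᵀ·Aᵀ)_{ij}/wᵗ)(w − wᵗ)²`
has a unique global minimizer, equal to the multiplicative update
`wᵗ · (X·Sᵀ·Aᵀ)_{ij} / (W·A·S·Sᵀ·Aᵀ)_{ij}`. -/
theorem aux_function_unique_minimizer_is_multiplicative_update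
    (n p q : ℕ)
    (X : Matrix (Fin n) (Fin p) ℝ) (W : Matrix (Fin n) (Fin q) ℝ)
    (A : Matrix (Fin q) (Fin q) ℝ) (S : Matrix (Fin q) (Fin p) ℝ)
    (i : Fin n) (j : Fin q)
    (hpos : 0 < W i j) (hden : 0 < (W * A * S * Sᵀ * Aᵀ) i j) :
    let F : ℝ → ℝ := fun w => objD X (updEntry W i j w) A S
    let G : ℝ → ℝ := fun w =>
      F (W i j) + deriv F (W i j) * (w - W i j)
        + ((W * A * S * Sᵀ * Aᵀ) i j / W i j) * (w - W i j) ^ 2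
    let wstar : ℝ := W i j * (X * Sᵀ * Aᵀ) i j / (W * A * S * Sᵀ * Aᵀ) i j
    (∀ w : ℝ, G wstar ≤ G w) ∧ (∀ m : ℝ, (∀ w : ℝ, G m ≤ G w) → m = wstar) := by
  intro F G wstar
  have hF : ∀ w, F w = objD X W A S
      + (-2 * ((X * Sᵀ * Aᵀ) i j - (W * A * S * Sᵀ * Aᵀ) i j)) * (w - W i j)
      + (A * S * Sᵀ * Aᵀ) j j * (w - W i j) ^ 2 := fun w => by
    simp only [F, objD_updEntry]
    ring
  have hF' : deriv F (W i j) = -2 * ((X * Sᵀ * Aᵀ) i j - (W * A * S * Sᵀ * Aᵀ) i j) :=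
    deriv_eq_of_forall_eq_quadratic hF
  have hG : ∀ w, G w = G wstar + (W * A * S * Sᵀ * Aᵀ) i j / W i j * (w - wstar) ^ 2 := by
    intro w
    simp only [G, wstar, hF']
    field_simp
    ring
  exact unique_minimizer_of_eq_add_mul_sq (div_pos hden hpos) hG
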